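/- arXiv:1408.3604 — 9 statements merged into one kernel-verified Lean document; each statement's English description precedes it below -/
import Mathlib

section
/- Let L be a regular abstract logic (the set of all expressions is not a theory) whose set of theories is closed under unions of chains. Then every theory of L is the intersection of a nonempty family of totally prime theories, i.e., the set of totally prime theories is a generator set for L. -/
/-!
A theory `M` that is maximal among the theories omitting a given expression `φ` is totally
prime: if `M = ⋂₀ 𝒯`, some member of `𝒯` omits `φ`, contains `M`, and hence equals `M`.
Closure under unions of chains lets Zorn's lemma extend any theory omitting `φ` to such a
maximal one, so every theory `T` is the intersection of the totally prime theories containing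
it; regularity makes that family nonempty.
-/

variable {α : Type*}

/-- A theory `T` is totally prime if whenever `T` is the intersection of a
nonempty family of theories, `T` belongs to that family. -/
def TotallyPrime (Th : Set (Set α)) (T : Set α) : Prop :=
  T ∈ Th ∧ ∀ 𝒯 ⊆ Th, 𝒯.Nonempty → T = ⋂₀ 𝒯 → T ∈ 𝒯

theorem totallyPrime_of_maximal_notMem {Th : Set (Set α)} {M : Set α} {φ : α}
    (hM : Maximal (fun S => S ∈ Th ∧ φ ∉ S) M) : TotallyPrime Th M := by
  refine ⟨hM.prop.1, fun 𝒯 h𝒯 _ hM𝒯 => ?_⟩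
  by_contra hMnotMem
  refine hM.prop.2 (hM𝒯 ▸ fun S hS => ?_)
  by_contra hφS
  have hMS : M ⊆ S := hM𝒯 ▸ Set.sInter_subset_of_mem hS
  exact hMnotMem ((hM.eq_of_subset ⟨h𝒯 hS, hφS⟩ hMS).symm ▸ hS)

theorem exists_totallyPrime_superset_notMem {Th : Set (Set α)}
    (hchain : ∀ 𝒞 ⊆ Th, 𝒞.Nonempty → IsChain (· ⊆ ·) 𝒞 → ⋃₀ 𝒞 ∈ Th)
    {T : Set α} (hT : T ∈ Th) {φ : α} (hφ : φ ∉ T) :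
    ∃ M, TotallyPrime Th M ∧ T ⊆ M ∧ φ ∉ M := by
  have hub : ∀ 𝒞 ⊆ {S | S ∈ Th ∧ φ ∉ S}, IsChain (· ⊆ ·) 𝒞 → 𝒞.Nonempty →
      ∃ U ∈ {S | S ∈ Th ∧ φ ∉ S}, ∀ S ∈ 𝒞, S ⊆ U := by
    intro 𝒞 h𝒞 h𝒞chain h𝒞ne
    refine ⟨⋃₀ 𝒞, ⟨hchain 𝒞 (fun S hS => (h𝒞 hS).1) h𝒞ne h𝒞chain, ?_⟩,
      fun S => Set.subset_sUnion_of_mem⟩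
    rintro ⟨S, hS, hφS⟩
    exact (h𝒞 hS).2 hφS
  obtain ⟨M, hTM, hM⟩ := zorn_subset_nonempty _ hub T ⟨hT, hφ⟩
  exact ⟨M, totallyPrime_of_maximal_notMem hM, hTM, hM.prop.2⟩

theorem sInter_totallyPrime_supersets_eq {Th : Set (Set α)}
    (hchain : ∀ 𝒞 ⊆ Th, 𝒞.Nonempty → IsChain (· ⊆ ·) 𝒞 → ⋃₀ 𝒞 ∈ Th)
    {T : Set α} (hT : T ∈ Th) : ⋂₀ {M | TotallyPrime Th M ∧ T ⊆ M} = T := by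
  refine Set.Subset.antisymm (fun x hx => ?_) (fun x hx M hM => hM.2 hx)
  by_contra hxT
  obtain ⟨M, hMprime, hTM, hxM⟩ := exists_totallyPrime_superset_notMem hchain hT hxT
  exact hxM (hx M ⟨hMprime, hTM⟩)

theorem stmt0_general (Th : Set (Set α))
    (hreg : (Set.univ : Set α) ∉ Th)
    (hchain : ∀ 𝒞 ⊆ Th, 𝒞.Nonempty → IsChain (· ⊆ ·) 𝒞 → ⋃₀ 𝒞 ∈ Th) :
    ∀ T ∈ Th, ∃ 𝒯 ⊆ {P | TotallyPrime Th P}, 𝒯.Nonempty ∧ T = ⋂₀ 𝒯 := by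
  intro T hT
  obtain ⟨φ, hφ⟩ : ∃ φ, φ ∉ T :=
    Set.ne_univ_iff_exists_notMem T |>.mp fun hTuniv => hreg (hTuniv ▸ hT)
  obtain ⟨M, hMprime, hTM, -⟩ := exists_totallyPrime_superset_notMem hchain hT hφ
  exact ⟨{M | TotallyPrime Th M ∧ T ⊆ M}, fun _ hM => hM.1, ⟨M, hMprime, hTM⟩,
    (sInter_totallyPrime_supersets_eq hchain hT).symm⟩

theorem stmt0 (Th : Set (Set α))
    (hne : Th.Nonempty)
    (hinter : ∀ 𝒯 ⊆ Th, 𝒯.Nonempty → ⋂₀ 𝒯 ∈ Th)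
    (hreg : (Set.univ : Set α) ∉ Th)
    (hchain : ∀ 𝒞 ⊆ Th, 𝒞.Nonempty → IsChain (· ⊆ ·) 𝒞 → ⋃₀ 𝒞 ∈ Th) :
    ∀ T ∈ Th, ∃ 𝒯 ⊆ {P | TotallyPrime Th P}, 𝒯.Nonempty ∧ T = ⋂₀ 𝒯 :=
  stmt0_general Th hreg hchain
end

section
/- Let L be a regular abstract logic closed under unions of chains, let T0 be a theory and a an expression with a ∉ T0. Then there exists a totally prime theory Ta with T0 ⊆ Ta and a ∉ Ta. -/
variable {α : Type*}

/-! Lindenbaum's lemma for abstract logics: a theory maximal among those omitting `a` is totally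
prime, because every theory strictly above it contains `a`, hence so does any intersection of such
theories. Maximal theories omitting `a` exist above any such theory by Zorn's lemma. -/

section

variable {Th : Set (Set α)} {a : α}

theorem exists_subset_maximal_notMem
    (hchain : ∀ 𝒞 ⊆ Th, 𝒞.Nonempty → IsChain (· ⊆ ·) 𝒞 → ⋃₀ 𝒞 ∈ Th)
    {T₀ : Set α} (hT₀ : T₀ ∈ Th) (ha : a ∉ T₀) :
    ∃ T, T₀ ⊆ T ∧ Maximal (fun T => T ∈ Th ∧ a ∉ T) T := by
  refine zorn_subset_nonempty _ (fun 𝒞 h𝒞 hchain𝒞 hne => ?_) T₀ ⟨hT₀, ha⟩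
  refine ⟨⋃₀ 𝒞, ⟨hchain 𝒞 (fun T hT => (h𝒞 hT).1) hne hchain𝒞, ?_⟩,
    fun _ => Set.subset_sUnion_of_mem⟩
  rintro ⟨T, hT, haT⟩
  exact (h𝒞 hT).2 haT

theorem Maximal.totallyPrime {T : Set α} (hT : Maximal (fun T => T ∈ Th ∧ a ∉ T) T) :
    TotallyPrime Th T := by
  refine ⟨hT.prop.1, fun 𝒯 h𝒯 _ hT𝒯 => ?_⟩
  by_contra hnot
  have ha : a ∈ ⋂₀ 𝒯 := fun U hU => by
    have hTU : T ⊆ U := hT𝒯 ▸ Set.sInter_subset_of_mem hU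
    by_contra haU
    exact hnot (hT.eq_of_subset ⟨h𝒯 hU, haU⟩ hTU ▸ hU)
  exact hT.prop.2 (hT𝒯 ▸ ha)

end

theorem stmt1_general (Th : Set (Set α))
    (hchain : ∀ 𝒞 ⊆ Th, 𝒞.Nonempty → IsChain (· ⊆ ·) 𝒞 → ⋃₀ 𝒞 ∈ Th)
    (T0 : Set α) (hT0 : T0 ∈ Th) (a : α) (ha : a ∉ T0) :
    ∃ Ta : Set α, TotallyPrime Th Ta ∧ T0 ⊆ Ta ∧ a ∉ Ta := by
  obtain ⟨Ta, hT0Ta, hmax⟩ := exists_subset_maximal_notMem hchain hT0 ha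
  exact ⟨Ta, hmax.totallyPrime, hT0Ta, hmax.prop.2⟩

theorem stmt1 (Th : Set (Set α))
    (hne : Th.Nonempty)
    (hinter : ∀ 𝒯 ⊆ Th, 𝒯.Nonempty → ⋂₀ 𝒯 ∈ Th)
    (hreg : (Set.univ : Set α) ∉ Th)
    (hchain : ∀ 𝒞 ⊆ Th, 𝒞.Nonempty → IsChain (· ⊆ ·) 𝒞 → ⋃₀ 𝒞 ∈ Th)
    (T0 : Set α) (hT0 : T0 ∈ Th) (a : α) (ha : a ∉ T0) :
    ∃ Ta : Set α, TotallyPrime Th Ta ∧ T0 ⊆ Ta ∧ a ∉ Ta :=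
  stmt1_general Th hchain T0 hT0 a ha
end

section
/- In a regular abstract logic closed under unions of chains, any maximal theory among those extending T0 and omitting a given expression a is totally prime. -/
variable {α : Type*}

theorem Set.exists_superset_notMem_of_eq_sInter {𝒯 : Set (Set α)} {M : Set α} {a : α}
    (hM : M = ⋂₀ 𝒯) (haM : a ∉ M) : ∃ T ∈ 𝒯, M ⊆ T ∧ a ∉ T := by
  subst hM
  obtain ⟨T, hT, haT⟩ : ∃ T ∈ 𝒯, a ∉ T := by simpa [Set.mem_sInter] using haM
  exact ⟨T, hT, Set.sInter_subset_of_mem hT, haT⟩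

theorem stmt2_general (Th : Set (Set α))
    (T0 : Set α) (a : α)
    (M : Set α) (hM : M ∈ Th) (hT0M : T0 ⊆ M) (haM : a ∉ M)
    (hmax : ∀ T ∈ Th, T0 ⊆ T → a ∉ T → M ⊆ T → T = M) :
    TotallyPrime Th M := by
  refine ⟨hM, fun 𝒯 h𝒯 _ hM𝒯 => ?_⟩
  obtain ⟨T, hT, hMT, haT⟩ := Set.exists_superset_notMem_of_eq_sInter hM𝒯 haM
  exact hmax T (h𝒯 hT) (hT0M.trans hMT) haT hMT ▸ hT

theorem stmt2 (Th : Set (Set α))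
    (hne : Th.Nonempty)
    (hinter : ∀ 𝒯 ⊆ Th, 𝒯.Nonempty → ⋂₀ 𝒯 ∈ Th)
    (hreg : (Set.univ : Set α) ∉ Th)
    (hchain : ∀ 𝒞 ⊆ Th, 𝒞.Nonempty → IsChain (· ⊆ ·) 𝒞 → ⋃₀ 𝒞 ∈ Th)
    (T0 : Set α) (hT0 : T0 ∈ Th) (a : α) (ha : a ∉ T0)
    (M : Set α) (hM : M ∈ Th) (hT0M : T0 ⊆ M) (haM : a ∉ M)
    (hmax : ∀ T ∈ Th, T0 ⊆ T → a ∉ T → M ⊆ T → T = M) :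
    TotallyPrime Th M :=
  stmt2_general Th T0 a M hM hT0M haM hmax
end

section
/- Let L be an intuitionistic abstract logic and P a prime theory. Then (a → b) ∈ P if and only if for every prime theory Q with P ⊆ Q, a ∈ Q implies b ∈ Q. -/
variable {α : Type*}

/-- A theory `T` is prime if whenever `T` is the intersection of a finite
nonempty family of theories, `T` belongs to that family. -/
def PrimeTheory (Th : Set (Set α)) (T : Set α) : Prop :=
  T ∈ Th ∧ ∀ 𝒯 ⊆ Th, 𝒯.Finite → 𝒯.Nonempty → T = ⋂₀ 𝒯 → T ∈ 𝒯

/-! Every theory is the intersection of the totally prime theories containing it, so membership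
in a theory can be tested at its totally prime extensions, where `a → b` obeys the Kripke clause.
Since totally prime theories are prime, quantifying over prime or over totally prime extensions
then gives the same condition. -/

theorem TotallyPrime.primeTheory {Th : Set (Set α)} {T : Set α} (h : TotallyPrime Th T) :
    PrimeTheory Th T :=
  ⟨h.1, fun 𝒯 h𝒯 _ hne heq => h.2 𝒯 h𝒯 hne heq⟩

theorem mem_iff_forall_totallyPrime {Th : Set (Set α)}
    (hgen : ∀ T ∈ Th, ∃ 𝒯 ⊆ {P | TotallyPrime Th P}, 𝒯.Nonempty ∧ T = ⋂₀ 𝒯)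
    {T : Set α} (hT : T ∈ Th) {x : α} :
    x ∈ T ↔ ∀ T', TotallyPrime Th T' → T ⊆ T' → x ∈ T' := by
  refine ⟨fun hx T' _ hTT' => hTT' hx, fun h => ?_⟩
  obtain ⟨𝒯, h𝒯, -, rfl⟩ := hgen T hT
  exact Set.mem_sInter.2 fun T' hT' => h T' (h𝒯 hT') (Set.sInter_subset_of_mem hT')

theorem stmt5_general (Th : Set (Set α)) (imp : α → α → α)
    (hgen : ∀ T ∈ Th, ∃ 𝒯 ⊆ {P | TotallyPrime Th P}, 𝒯.Nonempty ∧ T = ⋂₀ 𝒯)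
    (himp : ∀ a b : α, ∀ T, TotallyPrime Th T →
      (imp a b ∈ T ↔ ∀ T', TotallyPrime Th T' → T ⊆ T' → a ∈ T' → b ∈ T'))
    (a b : α) (P : Set α) (hP : PrimeTheory Th P) :
    imp a b ∈ P ↔ ∀ Q, PrimeTheory Th Q → P ⊆ Q → a ∈ Q → b ∈ Q := by
  constructor
  · intro hab Q hQ hPQ haQ
    refine (mem_iff_forall_totallyPrime hgen hQ.1).2 fun T hT hQT => ?_
    exact (himp a b T hT).1 (hQT (hPQ hab)) T hT subset_rfl (hQT haQ)
  · intro h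
    refine (mem_iff_forall_totallyPrime hgen hP.1).2 fun T hT hPT => ?_
    exact (himp a b T hT).2 fun T' hT' hTT' haT' =>
      h T' hT'.primeTheory (hPT.trans hTT') haT'

theorem stmt5 (Th : Set (Set α)) (imp : α → α → α)
    (hne : Th.Nonempty)
    (hinter : ∀ 𝒯 ⊆ Th, 𝒯.Nonempty → ⋂₀ 𝒯 ∈ Th)
    (hgen : ∀ T ∈ Th, ∃ 𝒯 ⊆ {P | TotallyPrime Th P}, 𝒯.Nonempty ∧ T = ⋂₀ 𝒯)
    (himp : ∀ a b : α, ∀ T, TotallyPrime Th T →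
      (imp a b ∈ T ↔ ∀ T', TotallyPrime Th T' → T ⊆ T' → a ∈ T' → b ∈ T'))
    (a b : α) (P : Set α) (hP : PrimeTheory Th P) :
    imp a b ∈ P ↔ ∀ Q, PrimeTheory Th Q → P ⊆ Q → a ∈ Q → b ∈ Q :=
  stmt5_general Th imp hgen himp a b P hP
end

section
/- Let L be a distributive abstract logic, T a theory, and S a nonempty set of expressions closed under disjunction with T ∩ S = ∅. Then there exists a prime theory P with T ⊆ P and P ∩ S = ∅. -/
/-!
By Zorn's lemma (theories are closed under unions of chains) there is a theory `P ⊇ T` maximal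
among the theories disjoint from `S`. Every theory is an intersection of totally prime theories,
so it contains `a ∨ b` as soon as it contains `a` or `b`. If `P = U₁ ∩ ⋯ ∩ Uₙ` with every `Uᵢ ≠ P`,
maximality gives `aᵢ ∈ Uᵢ ∩ S`; then `a₁ ∨ ⋯ ∨ aₙ` lies in `S` and in every `Uᵢ`, hence in `P`,
a contradiction.
-/

variable {α : Type*}

open Set

def AbsorbsOr (or : α → α → α) (U : Set α) : Prop :=
  ∀ ⦃a b : α⦄, a ∈ U ∨ b ∈ U → or a b ∈ U

theorem AbsorbsOr.sInter {or : α → α → α} {𝒯 : Set (Set α)} (h : ∀ U ∈ 𝒯, AbsorbsOr or U) :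
    AbsorbsOr or (⋂₀ 𝒯) := fun _ _ hab U hU =>
  h U hU (hab.imp (fun ha => ha U hU) (fun hb => hb U hU))

theorem absorbsOr_of_mem {Th : Set (Set α)} {or : α → α → α}
    (hgen : ∀ T ∈ Th, ∃ 𝒯 ⊆ {P | TotallyPrime Th P}, 𝒯.Nonempty ∧ T = ⋂₀ 𝒯)
    (hor : ∀ a b : α, ∀ Q, TotallyPrime Th Q → (or a b ∈ Q ↔ a ∈ Q ∨ b ∈ Q))
    {U : Set α} (hU : U ∈ Th) : AbsorbsOr or U := by
  obtain ⟨𝒯, h𝒯, -, rfl⟩ := hgen U hU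
  exact AbsorbsOr.sInter fun Q hQ _ _ hab => (hor _ _ Q (h𝒯 hQ)).2 hab

theorem nonempty_sInter_inter_of_absorbsOr {or : α → α → α} {S : Set α}
    (hS : ∀ a ∈ S, ∀ b ∈ S, or a b ∈ S) {𝒰 : Set (Set α)} (h𝒰fin : 𝒰.Finite)
    (h𝒰ne : 𝒰.Nonempty) (habs : ∀ U ∈ 𝒰, AbsorbsOr or U) (hmeet : ∀ U ∈ 𝒰, (U ∩ S).Nonempty) :
    (⋂₀ 𝒰 ∩ S).Nonempty := by
  induction 𝒰, h𝒰fin using Set.Finite.induction_on with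
  | empty => exact absurd h𝒰ne not_nonempty_empty
  | @insert V 𝒱 _ _ ih =>
    obtain ⟨a, haV, haS⟩ := hmeet V (mem_insert V 𝒱)
    rcases 𝒱.eq_empty_or_nonempty with rfl | h𝒱ne
    · exact ⟨a, by simpa using haV, haS⟩
    obtain ⟨c, hc, hcS⟩ := ih h𝒱ne (fun U hU => habs U (mem_insert_of_mem V hU))
      (fun U hU => hmeet U (mem_insert_of_mem V hU))
    refine ⟨or a c, ?_, hS a haS c hcS⟩
    rw [sInter_insert]
    exact ⟨habs V (mem_insert V 𝒱) (Or.inl haV),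
      fun U hU => habs U (mem_insert_of_mem V hU) (Or.inr (hc U hU))⟩

theorem exists_superset_maximal_disjoint {Th : Set (Set α)}
    (hchain : ∀ 𝒞 ⊆ Th, 𝒞.Nonempty → IsChain (· ⊆ ·) 𝒞 → ⋃₀ 𝒞 ∈ Th)
    {T S : Set α} (hT : T ∈ Th) (hTS : Disjoint T S) :
    ∃ P, T ⊆ P ∧ Maximal (fun U => U ∈ Th ∧ Disjoint U S) P :=
  zorn_subset_nonempty {U | U ∈ Th ∧ Disjoint U S}
    (fun 𝒞 h𝒞 h𝒞chain h𝒞ne =>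
      ⟨⋃₀ 𝒞, ⟨hchain 𝒞 (fun _ hU => (h𝒞 hU).1) h𝒞ne h𝒞chain,
        disjoint_sUnion_left.2 fun _ hU => (h𝒞 hU).2⟩, fun _ => subset_sUnion_of_mem⟩)
    T ⟨hT, hTS⟩

theorem primeTheory_of_maximal_disjoint {Th : Set (Set α)} {or : α → α → α} {S P : Set α}
    (habs : ∀ U ∈ Th, AbsorbsOr or U) (hS : ∀ a ∈ S, ∀ b ∈ S, or a b ∈ S)
    (hP : Maximal (fun U => U ∈ Th ∧ Disjoint U S) P) : PrimeTheory Th P := by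
  refine ⟨hP.prop.1, fun 𝒯 h𝒯 h𝒯fin h𝒯ne hP𝒯 => ?_⟩
  by_contra hPnotMem
  have hmeet : ∀ U ∈ 𝒯, (U ∩ S).Nonempty := by
    intro U hU
    rw [← not_disjoint_iff_nonempty_inter]
    intro hUS
    have hPU : P ⊆ U := hP𝒯 ▸ sInter_subset_of_mem hU
    exact hPnotMem (hP.eq_of_subset ⟨h𝒯 hU, hUS⟩ hPU ▸ hU)
  obtain ⟨c, hc, hcS⟩ :=
    nonempty_sInter_inter_of_absorbsOr hS h𝒯fin h𝒯ne (fun U hU => habs U (h𝒯 hU)) hmeet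
  exact disjoint_left.1 hP.prop.2 (hP𝒯 ▸ hc) hcS

theorem stmt6_general (Th : Set (Set α)) (or : α → α → α)
    (hchain : ∀ 𝒞 ⊆ Th, 𝒞.Nonempty → IsChain (· ⊆ ·) 𝒞 → ⋃₀ 𝒞 ∈ Th)
    (hgen : ∀ T ∈ Th, ∃ 𝒯 ⊆ {P | TotallyPrime Th P}, 𝒯.Nonempty ∧ T = ⋂₀ 𝒯)
    (hor : ∀ a b : α, ∀ Q, TotallyPrime Th Q → (or a b ∈ Q ↔ a ∈ Q ∨ b ∈ Q))
    (T : Set α) (hT : T ∈ Th)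
    (S : Set α)
    (hSdisj : ∀ a ∈ S, ∀ b ∈ S, or a b ∈ S)
    (hTS : T ∩ S = ∅) :
    ∃ P : Set α, PrimeTheory Th P ∧ T ⊆ P ∧ P ∩ S = ∅ := by
  obtain ⟨P, hTP, hP⟩ :=
    exists_superset_maximal_disjoint hchain hT (disjoint_iff_inter_eq_empty.2 hTS)
  exact ⟨P, primeTheory_of_maximal_disjoint (fun U hU => absorbsOr_of_mem hgen hor hU) hSdisj hP,
    hTP, disjoint_iff_inter_eq_empty.1 hP.prop.2⟩

theorem stmt6 (Th : Set (Set α)) (and or : α → α → α)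
    (hne : Th.Nonempty)
    (hinter : ∀ 𝒯 ⊆ Th, 𝒯.Nonempty → ⋂₀ 𝒯 ∈ Th)
    (hchain : ∀ 𝒞 ⊆ Th, 𝒞.Nonempty → IsChain (· ⊆ ·) 𝒞 → ⋃₀ 𝒞 ∈ Th)
    (hgen : ∀ T ∈ Th, ∃ 𝒯 ⊆ {P | TotallyPrime Th P}, 𝒯.Nonempty ∧ T = ⋂₀ 𝒯)
    (hand : ∀ a b : α, ∀ Q, TotallyPrime Th Q → (and a b ∈ Q ↔ a ∈ Q ∧ b ∈ Q))
    (hor : ∀ a b : α, ∀ Q, TotallyPrime Th Q → (or a b ∈ Q ↔ a ∈ Q ∨ b ∈ Q))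
    (T : Set α) (hT : T ∈ Th)
    (S : Set α) (hSne : S.Nonempty)
    (hSdisj : ∀ a ∈ S, ∀ b ∈ S, or a b ∈ S)
    (hTS : T ∩ S = ∅) :
    ∃ P : Set α, PrimeTheory Th P ∧ T ⊆ P ∧ P ∩ S = ∅ :=
  stmt6_general Th or hchain hgen hor T hT S hSdisj hTS
end

section
/- Let A be a bounded distributive lattice. Define an abstract logic whose expressions are elements of A and whose theories are the proper filters of A. Then the set of theories is closed under nonempty intersections and under unions of nonempty chains, and the prime theories (theories that are not proper intersections of finitely many strictly larger theories) are exactly the prime filters of A. -/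
/-!
Intersections of proper filters are proper filters since they contain `⊤`, and unions of chains
of them are since they omit `⊥`. A prime filter `P` avoids finite intersections: if `⋂ 𝒯 ⊆ P`
then some `T ∈ 𝒯` lies in `P`, so `P` is prime as a theory. Conversely, if `a ⊔ b ∈ P` with
`a, b ∉ P`, distributivity gives `P = ⟨P, a⟩ ∩ ⟨P, b⟩` for the filters `⟨P, a⟩ ∋ a` and
`⟨P, b⟩ ∋ b` generated over `P`: a decomposition of `P` into two strictly larger proper filters.
-/

variable {α : Type*}

/-- A filter of a lattice: nonempty, upward closed, and closed under binary meets. -/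
def IsLatFilter [Lattice α] (F : Set α) : Prop :=
  F.Nonempty ∧ (∀ x ∈ F, ∀ y, x ≤ y → y ∈ F) ∧ ∀ x ∈ F, ∀ y ∈ F, x ⊓ y ∈ F

/-- A prime filter: a proper filter such that `a ⊔ b ∈ F` implies `a ∈ F` or `b ∈ F`. -/
def IsPrimeFilter [Lattice α] (F : Set α) : Prop :=
  IsLatFilter F ∧ F ≠ Set.univ ∧ ∀ a b : α, a ⊔ b ∈ F → a ∈ F ∨ b ∈ F

def properLatFilters (α : Type*) [Lattice α] : Set (Set α) :=
  {F : Set α | IsLatFilter F ∧ F ≠ Set.univ}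

def filterAdjoin [Lattice α] (P : Set α) (a : α) : Set α :=
  {x | ∃ p ∈ P, p ⊓ a ≤ x}

section Lattice

variable [Lattice α] {F P : Set α}

theorem IsLatFilter.top_mem [OrderTop α] (hF : IsLatFilter F) : ⊤ ∈ F := by
  obtain ⟨x, hx⟩ := hF.1
  exact hF.2.1 x hx ⊤ le_top

theorem IsLatFilter.bot_notMem [OrderBot α] (hF : IsLatFilter F) (hne : F ≠ Set.univ) :
    ⊥ ∉ F :=
  fun hbot ↦ hne (Set.eq_univ_of_forall fun y ↦ hF.2.1 ⊥ hbot y bot_le)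

theorem IsLatFilter.sInter [OrderTop α] {𝒯 : Set (Set α)} (h𝒯 : ∀ F ∈ 𝒯, IsLatFilter F) :
    IsLatFilter (⋂₀ 𝒯) :=
  ⟨⟨⊤, fun F hF ↦ (h𝒯 F hF).top_mem⟩,
    fun x hx y hxy F hF ↦ (h𝒯 F hF).2.1 x (hx F hF) y hxy,
    fun x hx y hy F hF ↦ (h𝒯 F hF).2.2 x (hx F hF) y (hy F hF)⟩

theorem IsLatFilter.sUnion {𝒞 : Set (Set α)} (h𝒞 : ∀ F ∈ 𝒞, IsLatFilter F) (hne : 𝒞.Nonempty)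
    (hchain : IsChain (· ⊆ ·) 𝒞) : IsLatFilter (⋃₀ 𝒞) := by
  refine ⟨?_, ?_, ?_⟩
  · obtain ⟨F, hF⟩ := hne
    obtain ⟨x, hx⟩ := (h𝒞 F hF).1
    exact ⟨x, F, hF, hx⟩
  · rintro x ⟨F, hF, hx⟩ y hxy
    exact ⟨F, hF, (h𝒞 F hF).2.1 x hx y hxy⟩
  · rintro x ⟨F, hF, hx⟩ y ⟨G, hG, hy⟩
    rcases hchain.total hF hG with hFG | hGF
    · exact ⟨G, hG, (h𝒞 G hG).2.2 x (hFG hx) y hy⟩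
    · exact ⟨F, hF, (h𝒞 F hF).2.2 x hx y (hGF hy)⟩

theorem sInter_mem_properLatFilters [OrderTop α] {𝒯 : Set (Set α)}
    (h𝒯 : 𝒯 ⊆ properLatFilters α) (hne : 𝒯.Nonempty) : ⋂₀ 𝒯 ∈ properLatFilters α := by
  obtain ⟨F, hF⟩ := hne
  refine ⟨IsLatFilter.sInter fun T hT ↦ (h𝒯 hT).1, fun htop ↦ (h𝒯 hF).2 ?_⟩
  exact Set.eq_univ_of_univ_subset (htop ▸ Set.sInter_subset_of_mem hF)

theorem sUnion_mem_properLatFilters [OrderBot α] {𝒞 : Set (Set α)}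
    (h𝒞 : 𝒞 ⊆ properLatFilters α) (hne : 𝒞.Nonempty) (hchain : IsChain (· ⊆ ·) 𝒞) :
    ⋃₀ 𝒞 ∈ properLatFilters α := by
  refine ⟨IsLatFilter.sUnion (fun T hT ↦ (h𝒞 hT).1) hne hchain, fun htop ↦ ?_⟩
  obtain ⟨T, hT, hbot⟩ := htop.symm ▸ Set.mem_univ (⊥ : α)
  exact (h𝒞 hT).1.bot_notMem (h𝒞 hT).2 hbot

theorem subset_filterAdjoin (P : Set α) (a : α) : P ⊆ filterAdjoin P a :=
  fun p hp ↦ ⟨p, hp, inf_le_left⟩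

theorem mem_filterAdjoin_self (hP : P.Nonempty) (a : α) : a ∈ filterAdjoin P a :=
  let ⟨p, hp⟩ := hP
  ⟨p, hp, inf_le_right⟩

theorem IsLatFilter.filterAdjoin (hP : IsLatFilter P) (a : α) : IsLatFilter (filterAdjoin P a) :=
  ⟨⟨a, mem_filterAdjoin_self hP.1 a⟩,
    fun _ ⟨p, hp, hpx⟩ _ hxy ↦ ⟨p, hp, hpx.trans hxy⟩,
    fun x ⟨p, hp, hpx⟩ y ⟨q, hq, hqy⟩ ↦ ⟨p ⊓ q, hP.2.2 p hp q hq,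
      calc p ⊓ q ⊓ a = p ⊓ a ⊓ (q ⊓ a) := inf_inf_distrib_right p q a
        _ ≤ x ⊓ y := inf_le_inf hpx hqy⟩⟩

theorem IsPrimeFilter.exists_subset_of_sInter_subset (hP : IsPrimeFilter P)
    {𝒯 : Set (Set α)} (hfin : 𝒯.Finite) (h𝒯 : ∀ T ∈ 𝒯, ∀ x ∈ T, ∀ y, x ≤ y → y ∈ T)
    (hsub : ⋂₀ 𝒯 ⊆ P) : ∃ T ∈ 𝒯, T ⊆ P := by
  induction 𝒯, hfin using Set.Finite.induction_on with
  | empty =>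
    exact absurd (Set.eq_univ_of_univ_subset (Set.sInter_empty ▸ hsub)) hP.2.1
  | @insert T 𝒮 _ _ ih =>
    rw [Set.sInter_insert] at hsub
    by_cases hT : T ⊆ P
    · exact ⟨T, Set.mem_insert T 𝒮, hT⟩
    obtain ⟨a, haT, haP⟩ := Set.not_subset.mp hT
    have h𝒮 : ⋂₀ 𝒮 ⊆ P := by
      intro x hx
      have hax : a ⊔ x ∈ T ∩ ⋂₀ 𝒮 :=
        ⟨h𝒯 T (Set.mem_insert T 𝒮) a haT _ le_sup_left,
          fun S hS ↦ h𝒯 S (Set.mem_insert_of_mem T hS) x (hx S hS) _ le_sup_right⟩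
      exact (hP.2.2 a x (hsub hax)).resolve_left haP
    obtain ⟨S, hS, hSP⟩ := ih (fun S hS ↦ h𝒯 S (Set.mem_insert_of_mem T hS)) h𝒮
    exact ⟨S, Set.mem_insert_of_mem T hS, hSP⟩

theorem IsPrimeFilter.primeTheory (hP : IsPrimeFilter P) :
    PrimeTheory (properLatFilters α) P := by
  refine ⟨⟨hP.1, hP.2.1⟩, fun 𝒯 h𝒯 hfin _ hP𝒯 ↦ ?_⟩
  obtain ⟨T, hT, hTP⟩ := hP.exists_subset_of_sInter_subset hfin
    (fun T hT ↦ (h𝒯 hT).1.2.1) hP𝒯.ge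
  rwa [← hTP.antisymm (hP𝒯 ▸ Set.sInter_subset_of_mem hT)]

end Lattice

section DistribLattice

variable [DistribLattice α] {P : Set α}

theorem filterAdjoin_inter_filterAdjoin (hP : IsLatFilter P) {a b : α} (hab : a ⊔ b ∈ P) :
    filterAdjoin P a ∩ filterAdjoin P b = P := by
  refine (Set.subset_inter (subset_filterAdjoin P a) (subset_filterAdjoin P b)).antisymm' ?_
  rintro x ⟨⟨p, hp, hpx⟩, ⟨q, hq, hqx⟩⟩
  refine hP.2.1 _ (hP.2.2 _ (hP.2.2 p hp q hq) _ hab) x ?_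
  calc p ⊓ q ⊓ (a ⊔ b) = p ⊓ q ⊓ a ⊔ p ⊓ q ⊓ b := inf_sup_left _ _ _
    _ ≤ x := sup_le ((inf_le_inf_right a inf_le_left).trans hpx)
      ((inf_le_inf_right b inf_le_right).trans hqx)

theorem PrimeTheory.isPrimeFilter (hP : PrimeTheory (properLatFilters α) P) :
    IsPrimeFilter P := by
  obtain ⟨⟨hPfil, hPne⟩, hprime⟩ := hP
  refine ⟨hPfil, hPne, fun a b hab ↦ by_contra fun hnot ↦ ?_⟩
  obtain ⟨haP, hbP⟩ := not_or.mp hnot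
  have hsplit := filterAdjoin_inter_filterAdjoin hPfil hab
  have ha := mem_filterAdjoin_self hPfil.1 a
  have hb := mem_filterAdjoin_self hPfil.1 b
  -- each half is proper, since the other half carries an element outside `P`
  have hmem : {filterAdjoin P a, filterAdjoin P b} ⊆ properLatFilters α := by
    rintro T (rfl | rfl)
    · refine ⟨hPfil.filterAdjoin a, fun htop ↦ hbP ?_⟩
      rw [← hsplit, htop, Set.univ_inter]
      exact hb
    · refine ⟨hPfil.filterAdjoin b, fun htop ↦ haP ?_⟩
      rw [← hsplit, htop, Set.inter_univ]
      exact ha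
  rcases hprime _ hmem (Set.toFinite _) (Set.insert_nonempty _ _)
    (by rw [Set.sInter_pair, hsplit]) with hPa | hPb
  · exact haP (hPa ▸ ha)
  · exact hbP ((Set.mem_singleton_iff.mp hPb) ▸ hb)

end DistribLattice

theorem stmt11 [DistribLattice α] [BoundedOrder α] :
    (∀ 𝒯 ⊆ {F : Set α | IsLatFilter F ∧ F ≠ Set.univ}, 𝒯.Nonempty →
      ⋂₀ 𝒯 ∈ {F : Set α | IsLatFilter F ∧ F ≠ Set.univ}) ∧
    (∀ 𝒞 ⊆ {F : Set α | IsLatFilter F ∧ F ≠ Set.univ}, 𝒞.Nonempty →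
      IsChain (· ⊆ ·) 𝒞 → ⋃₀ 𝒞 ∈ {F : Set α | IsLatFilter F ∧ F ≠ Set.univ}) ∧
    (∀ P : Set α,
      PrimeTheory {F : Set α | IsLatFilter F ∧ F ≠ Set.univ} P ↔ IsPrimeFilter P) := by
  exact ⟨fun _ h𝒯 h𝒯ne ↦ sInter_mem_properLatFilters h𝒯 h𝒯ne,
    fun _ h𝒞 h𝒞ne hchain ↦ sUnion_mem_properLatFilters h𝒞 h𝒞ne hchain,
    fun _ ↦ ⟨PrimeTheory.isPrimeFilter, IsPrimeFilter.primeTheory⟩⟩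
end

section
/- Let L be an intuitionistic abstract logic with order a ≤ b iff S_a ⊆ S_b (S_a the prime theories containing a). Then the implication connective satisfies the Heyting adjunction: for all expressions z, a, b, z ≤ (a → b) if and only if z ∧ a ≤ b. -/
/-! The sets `S_a` are upward closed in the poset of prime theories under `⊆`, `S_(z ∧ a)` is
`S_z ∩ S_a`, and `S_(a → b)` is the Kripke implication of `S_a` and `S_b`. The forward direction
instantiates that implication at `P' = P`; the backward one uses that `S_z` is upward closed. -/

variable {α : Type*}

/-- `S_a`, the set of prime theories containing `a`. -/
def primeSet (Th : Set (Set α)) (a : α) : Set (Set α) :=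
  {P | PrimeTheory Th P ∧ a ∈ P}

section

variable {Th : Set (Set α)}

theorem primeSet_and {and : α → α → α}
    (hand : ∀ a b : α, ∀ P, PrimeTheory Th P → (and a b ∈ P ↔ a ∈ P ∧ b ∈ P)) (a b : α) :
    primeSet Th (and a b) = primeSet Th a ∩ primeSet Th b := by
  ext P
  constructor
  · rintro ⟨hP, hab⟩
    obtain ⟨ha, hb⟩ := (hand a b P hP).1 hab
    exact ⟨⟨hP, ha⟩, hP, hb⟩
  · rintro ⟨⟨hP, ha⟩, -, hb⟩
    exact ⟨hP, (hand a b P hP).2 ⟨ha, hb⟩⟩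

theorem mem_primeSet_imp {imp : α → α → α}
    (himp : ∀ a b : α, ∀ P, PrimeTheory Th P →
      (imp a b ∈ P ↔ ∀ P', PrimeTheory Th P' → P ⊆ P' → a ∈ P' → b ∈ P'))
    {a b : α} {P : Set α} :
    P ∈ primeSet Th (imp a b) ↔
      PrimeTheory Th P ∧ ∀ P' ∈ primeSet Th a, P ⊆ P' → P' ∈ primeSet Th b := by
  refine ⟨fun ⟨hP, hab⟩ => ⟨hP, fun P' ⟨hP', ha⟩ hPP' => ?_⟩,
    fun ⟨hP, h⟩ => ⟨hP, (himp a b P hP).2 fun P' hP' hPP' ha => (h P' ⟨hP', ha⟩ hPP').2⟩⟩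
  exact ⟨hP', (himp a b P hP).1 hab P' hP' hPP' ha⟩

theorem mem_primeSet_of_subset {z : α} {P P' : Set α} (hP : P ∈ primeSet Th z)
    (hP' : PrimeTheory Th P') (hPP' : P ⊆ P') : P' ∈ primeSet Th z :=
  ⟨hP', hPP' hP.2⟩

end

theorem stmt15_general (Th : Set (Set α)) (and imp : α → α → α)
    (hand : ∀ a b : α, ∀ P, PrimeTheory Th P → (and a b ∈ P ↔ a ∈ P ∧ b ∈ P))
    (himp : ∀ a b : α, ∀ P, PrimeTheory Th P →
      (imp a b ∈ P ↔ ∀ P', PrimeTheory Th P' → P ⊆ P' → a ∈ P' → b ∈ P'))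
    (z a b : α) :
    primeSet Th z ⊆ primeSet Th (imp a b) ↔ primeSet Th (and z a) ⊆ primeSet Th b := by
  rw [primeSet_and hand]
  constructor
  · rintro h P ⟨hPz, hPa⟩
    exact ((mem_primeSet_imp himp).1 (h hPz)).2 P hPa subset_rfl
  · intro h P hPz
    refine (mem_primeSet_imp himp).2 ⟨hPz.1, fun P' hP'a hPP' => h ⟨?_, hP'a⟩⟩
    exact mem_primeSet_of_subset hPz hP'a.1 hPP'

theorem stmt15 (Th : Set (Set α)) (and or imp : α → α → α)
    (hne : Th.Nonempty)
    (hinter : ∀ 𝒯 ⊆ Th, 𝒯.Nonempty → ⋂₀ 𝒯 ∈ Th)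
    (hgen : ∀ T ∈ Th, ∃ 𝒯 ⊆ {P | PrimeTheory Th P}, 𝒯.Nonempty ∧ T = ⋂₀ 𝒯)
    (hand : ∀ a b : α, ∀ P, PrimeTheory Th P → (and a b ∈ P ↔ a ∈ P ∧ b ∈ P))
    (himp : ∀ a b : α, ∀ P, PrimeTheory Th P →
      (imp a b ∈ P ↔ ∀ P', PrimeTheory Th P' → P ⊆ P' → a ∈ P' → b ∈ P'))
    (hmp : ∀ a b : α, ∀ T ∈ Th, a ∈ T → imp a b ∈ T → b ∈ T)
    (z a b : α) :
    primeSet Th z ⊆ primeSet Th (imp a b) ↔ primeSet Th (and z a) ⊆ primeSet Th b :=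
  stmt15_general Th and imp hand himp z a b
end

section
/- Let L be an intuitionistic abstract logic. Then the quotient of its expressions by logical equivalence (a ≡ b iff a and b lie in the same prime theories), ordered by a ≤ b iff S_a ⊆ S_b, is a Heyting algebra with meet, join, and implication induced by ∧, ∨, →, bottom ⊥ and top ⊤. -/
/-!
Sending `a` to the set `S_a` of prime theories containing it turns `∧`, `∨`, `⊥`, `⊤` into
intersection, union, `∅` and the set of all prime theories, and `→` into Kripke implication. These
are the Heyting operations on the up-sets of the poset of prime theories, so the quotient by `≡`,
on which `a ↦ S_a` is injective, is a Heyting subalgebra of that algebra of up-sets.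
-/

variable {α : Type*}

/-- Logical equivalence: lying in the same prime theories. -/
def logicSetoid (Th : Set (Set α)) : Setoid α :=
  ⟨fun a b => primeSet Th a = primeSet Th b, ⟨fun _ => rfl, Eq.symm, Eq.trans⟩⟩

open OrderDual

theorem LowerSet.coe_himp {β : Type*} [Preorder β] (s t : LowerSet β) :
    ((s ⇨ t : LowerSet β) : Set β) = {x | ∀ y ≤ x, y ∈ s → y ∈ t} := by
  let kripke : LowerSet β := ⟨{x | ∀ y ≤ x, y ∈ s → y ∈ t}, fun x z hzx hx y hyz => hx y (hyz.trans hzx)⟩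
  suffices s ⇨ t = kripke from congrArg SetLike.coe this
  refine le_antisymm (fun x hx y hyx hy => ?_) (le_himp_iff.2 fun x ⟨hx, hxs⟩ => hx x le_rfl hxs)
  exact LowerSet.coe_subset_coe.2 (himp_inf_le (a := s)) ⟨(s ⇨ t).lower hyx hx, hy⟩

theorem Setoid.respects₂_of_map_eq {β : Type*} {s : Setoid α} {f : α → β}
    (hf : ∀ a b, s a b ↔ f a = f b) {op : α → α → α} {F : β → β → β}
    (map_op : ∀ a b, f (op a b) = F (f a) (f b)) :
    ∀ ⦃a a'⦄, s a a' → ∀ ⦃b b'⦄, s b b' → s (op a b) (op a' b') :=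
  fun a a' ha b b' hb => (hf _ _).2 <| by rw [map_op, map_op, (hf _ _).1 ha, (hf _ _).1 hb]

abbrev Quotient.heytingAlgebraOfKernel {β : Type*} [HeytingAlgebra β] (s : Setoid α) (f : α → β)
    (hf : ∀ a b, s a b ↔ f a = f b) (inf sup himp : α → α → α) (bot top : α)
    (map_inf : ∀ a b, f (inf a b) = f a ⊓ f b) (map_sup : ∀ a b, f (sup a b) = f a ⊔ f b)
    (map_himp : ∀ a b, f (himp a b) = f a ⇨ f b) (map_bot : f bot = ⊥) (map_top : f top = ⊤) :
    HeytingAlgebra (Quotient s) :=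
  let g : Quotient s → β := Quotient.lift f fun a b h => (hf a b).1 h
  have hg : Function.Injective g := by
    rintro ⟨a⟩ ⟨b⟩ h
    exact Quotient.sound ((hf a b).2 h)
  letI : Min (Quotient s) := ⟨Quotient.map₂ inf (Setoid.respects₂_of_map_eq hf map_inf)⟩
  letI : Max (Quotient s) := ⟨Quotient.map₂ sup (Setoid.respects₂_of_map_eq hf map_sup)⟩
  letI : HImp (Quotient s) := ⟨Quotient.map₂ himp (Setoid.respects₂_of_map_eq hf map_himp)⟩
  letI : Bot (Quotient s) := ⟨Quotient.mk s bot⟩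
  letI : Top (Quotient s) := ⟨Quotient.mk s top⟩
  letI : Compl (Quotient s) := ⟨fun x => x ⇨ ⊥⟩
  letI : LE (Quotient s) := ⟨fun x y => g x ≤ g y⟩
  letI : LT (Quotient s) := ⟨fun x y => g x < g y⟩
  hg.heytingAlgebra g Iff.rfl Iff.rfl
    (by rintro ⟨a⟩ ⟨b⟩; exact map_sup a b) (by rintro ⟨a⟩ ⟨b⟩; exact map_inf a b) map_top map_bot
    (by rintro ⟨a⟩; exact (map_himp a bot).trans (by rw [map_bot, himp_bot]))
    (by rintro ⟨a⟩ ⟨b⟩; exact map_himp a b)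

/-- Prime theories ordered by reverse inclusion, so that the sets `primeSet Th a` become lower
sets. -/
abbrev PrimeFrame (Th : Set (Set α)) : Type _ := {P : Set α // PrimeTheory Th P}ᵒᵈ

def truthSet (Th : Set (Set α)) (a : α) : LowerSet (PrimeFrame Th) :=
  ⟨{P | a ∈ (ofDual P).1}, fun _ _ hPQ ha => hPQ ha⟩

section truthSet

variable (Th : Set (Set α))

theorem truthSet_le_iff {a b : α} : truthSet Th a ≤ truthSet Th b ↔ primeSet Th a ⊆ primeSet Th b :=
  ⟨fun h P ⟨hP, ha⟩ => ⟨hP, h (a := toDual ⟨P, hP⟩) ha⟩, fun h P ha => (h ⟨(ofDual P).2, ha⟩).2⟩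

theorem truthSet_eq_iff {a b : α} : truthSet Th a = truthSet Th b ↔ primeSet Th a = primeSet Th b := by
  rw [le_antisymm_iff, truthSet_le_iff, truthSet_le_iff, Set.Subset.antisymm_iff]

theorem truthSet_and {and : α → α → α}
    (hand : ∀ a b : α, ∀ P, PrimeTheory Th P → (and a b ∈ P ↔ a ∈ P ∧ b ∈ P)) (a b : α) :
    truthSet Th (and a b) = truthSet Th a ⊓ truthSet Th b :=
  SetLike.ext fun P => hand a b _ (ofDual P).2

theorem truthSet_or {or : α → α → α}
    (hor : ∀ a b : α, ∀ P, PrimeTheory Th P → (or a b ∈ P ↔ a ∈ P ∨ b ∈ P)) (a b : α) :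
    truthSet Th (or a b) = truthSet Th a ⊔ truthSet Th b :=
  SetLike.ext fun P => hor a b _ (ofDual P).2

theorem truthSet_imp {imp : α → α → α}
    (himp : ∀ a b : α, ∀ P, PrimeTheory Th P →
      (imp a b ∈ P ↔ ∀ P', PrimeTheory Th P' → P ⊆ P' → a ∈ P' → b ∈ P')) (a b : α) :
    truthSet Th (imp a b) = truthSet Th a ⇨ truthSet Th b := by
  refine SetLike.ext' (Set.ext fun P => ?_)
  rw [LowerSet.coe_himp]
  exact (himp a b _ (ofDual P).2).trans
    ⟨fun h Q hQP ha => h _ (ofDual Q).2 hQP ha, fun h P' hP' hPP' ha => h (toDual ⟨P', hP'⟩) hPP' ha⟩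

theorem truthSet_bot {bot : α} (hbot : ∀ P, PrimeTheory Th P → bot ∉ P) : truthSet Th bot = ⊥ :=
  SetLike.ext fun P => iff_of_false (hbot _ (ofDual P).2) id

theorem truthSet_top {top : α} (htop : ∀ P, PrimeTheory Th P → top ∈ P) : truthSet Th top = ⊤ :=
  SetLike.ext fun P => iff_of_true (htop _ (ofDual P).2) trivial

end truthSet

theorem stmt16_general (Th : Set (Set α)) (and or imp : α → α → α) (bot top : α)
    (hand : ∀ a b : α, ∀ P, PrimeTheory Th P → (and a b ∈ P ↔ a ∈ P ∧ b ∈ P))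
    (hor : ∀ a b : α, ∀ P, PrimeTheory Th P → (or a b ∈ P ↔ a ∈ P ∨ b ∈ P))
    (himp : ∀ a b : α, ∀ P, PrimeTheory Th P →
      (imp a b ∈ P ↔ ∀ P', PrimeTheory Th P' → P ⊆ P' → a ∈ P' → b ∈ P'))
    (htop : ∀ P, PrimeTheory Th P → top ∈ P)
    (hbot : ∀ P, PrimeTheory Th P → bot ∉ P) :
    ∃ inst : HeytingAlgebra (Quotient (logicSetoid Th)),
      (∀ a b : α,
        (inst.le (Quotient.mk (logicSetoid Th) a) (Quotient.mk (logicSetoid Th) b)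
          ↔ primeSet Th a ⊆ primeSet Th b) ∧
        inst.inf (Quotient.mk (logicSetoid Th) a) (Quotient.mk (logicSetoid Th) b)
          = Quotient.mk (logicSetoid Th) (and a b) ∧
        inst.sup (Quotient.mk (logicSetoid Th) a) (Quotient.mk (logicSetoid Th) b)
          = Quotient.mk (logicSetoid Th) (or a b) ∧
        inst.himp (Quotient.mk (logicSetoid Th) a) (Quotient.mk (logicSetoid Th) b)
          = Quotient.mk (logicSetoid Th) (imp a b)) ∧
      inst.bot = Quotient.mk (logicSetoid Th) bot ∧
      inst.top = Quotient.mk (logicSetoid Th) top :=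
  ⟨Quotient.heytingAlgebraOfKernel (logicSetoid Th) (truthSet Th)
      (fun _ _ => (truthSet_eq_iff Th).symm) and or imp bot top (truthSet_and Th hand)
      (truthSet_or Th hor) (truthSet_imp Th himp) (truthSet_bot Th hbot) (truthSet_top Th htop),
    fun _ _ => ⟨truthSet_le_iff Th, rfl, rfl, rfl⟩, rfl, rfl⟩

theorem stmt16 (Th : Set (Set α)) (and or imp : α → α → α) (bot top : α)
    (hne : Th.Nonempty)
    (hinter : ∀ 𝒯 ⊆ Th, 𝒯.Nonempty → ⋂₀ 𝒯 ∈ Th)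
    (hgen : ∀ T ∈ Th, ∃ 𝒯 ⊆ {P | PrimeTheory Th P}, 𝒯.Nonempty ∧ T = ⋂₀ 𝒯)
    (hand : ∀ a b : α, ∀ P, PrimeTheory Th P → (and a b ∈ P ↔ a ∈ P ∧ b ∈ P))
    (hor : ∀ a b : α, ∀ P, PrimeTheory Th P → (or a b ∈ P ↔ a ∈ P ∨ b ∈ P))
    (himp : ∀ a b : α, ∀ P, PrimeTheory Th P →
      (imp a b ∈ P ↔ ∀ P', PrimeTheory Th P' → P ⊆ P' → a ∈ P' → b ∈ P'))
    (htop : ∀ P, PrimeTheory Th P → top ∈ P)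
    (hbot : ∀ P, PrimeTheory Th P → bot ∉ P)
    (hsep : ∀ T ∈ Th, ∀ a ∉ T, ∃ P : Set α, PrimeTheory Th P ∧ T ⊆ P ∧ a ∉ P) :
    ∃ inst : HeytingAlgebra (Quotient (logicSetoid Th)),
      (∀ a b : α,
        (inst.le (Quotient.mk (logicSetoid Th) a) (Quotient.mk (logicSetoid Th) b)
          ↔ primeSet Th a ⊆ primeSet Th b) ∧
        inst.inf (Quotient.mk (logicSetoid Th) a) (Quotient.mk (logicSetoid Th) b)
          = Quotient.mk (logicSetoid Th) (and a b) ∧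
        inst.sup (Quotient.mk (logicSetoid Th) a) (Quotient.mk (logicSetoid Th) b)
          = Quotient.mk (logicSetoid Th) (or a b) ∧
        inst.himp (Quotient.mk (logicSetoid Th) a) (Quotient.mk (logicSetoid Th) b)
          = Quotient.mk (logicSetoid Th) (imp a b)) ∧
      inst.bot = Quotient.mk (logicSetoid Th) bot ∧
      inst.top = Quotient.mk (logicSetoid Th) top :=
  stmt16_general Th and or imp bot top hand hor himp htop hbot
end

section
/- Let A be a Heyting algebra and let a, b ∈ A. For every prime filter T of A: (a → b) ∈ T if and only if for every prime filter T' with T ⊆ T', a ∈ T' implies b ∈ T'. -/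
variable {α : Type*}

/-!
The forward direction is modus ponens inside a filter: `a ⊓ (a ⇨ b) ≤ b`. For the converse,
if `a ⇨ b ∉ T`, then `{x | a ⇨ x ∈ T}` is a filter containing `T` and `a` but not `b`, and the
prime ideal separation theorem extends it to a prime filter still avoiding `b`.
-/

theorem Order.Ideal.IsPrime.isPrimeFilter_compl [Lattice α] {J : Order.Ideal α}
    (hJ : J.IsPrime) : IsPrimeFilter (J : Set α)ᶜ := by
  refine ⟨⟨?_, ?_, ?_⟩, ?_, ?_⟩
  · exact Set.nonempty_compl.mpr (J.isProper_iff.mp hJ.toIsProper)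
  · exact fun x hx y hxy hy => hx (J.lower hxy hy)
  · exact fun x hx y hy hxy => (hJ.mem_or_mem hxy).elim hx hy
  · obtain ⟨x, hx⟩ := J.nonempty
    exact fun h => (h.symm ▸ Set.mem_univ x : x ∈ (J : Set α)ᶜ) hx
  · intro x y hxy
    by_contra! h
    exact hxy (J.sup_mem (not_not.mp h.1) (not_not.mp h.2))

namespace IsLatFilter

section Lattice

variable [Lattice α] {F : Set α}

theorem isPFilter (hF : IsLatFilter F) : Order.IsPFilter F :=
  .of_def hF.1 (fun x hx y hy => ⟨x ⊓ y, hF.2.2 x hx y hy, inf_le_left, inf_le_right⟩)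
    (fun hxy hx => hF.2.1 _ hx _ hxy)

end Lattice

theorem exists_isPrimeFilter_of_notMem [DistribLattice α] {F : Set α} (hF : IsLatFilter F)
    {b : α} (hb : b ∉ F) : ∃ P, IsPrimeFilter P ∧ F ⊆ P ∧ b ∉ P := by
  have hdisj : Disjoint (hF.isPFilter.toPFilter : Set α) (Order.Ideal.principal b : Set α) :=
    Set.disjoint_left.mpr fun x hx hxb => hb (hF.2.1 x hx b hxb)
  obtain ⟨J, hJ, hbJ, hFJ⟩ := DistribLattice.prime_ideal_of_disjoint_filter_ideal hdisj
  exact ⟨_, hJ.isPrimeFilter_compl, fun x hx => Set.disjoint_left.mp hFJ hx,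
    fun h => h (hbJ (Order.Ideal.mem_principal.mpr le_rfl))⟩

section GeneralizedHeytingAlgebra

variable [GeneralizedHeytingAlgebra α] {F : Set α}

theorem mem_of_himp_mem (hF : IsLatFilter F) {a b : α} (ha : a ∈ F) (hab : a ⇨ b ∈ F) :
    b ∈ F :=
  hF.2.1 _ (hF.2.2 a ha _ hab) b inf_himp_le

theorem top_mem_s17 (hF : IsLatFilter F) : ⊤ ∈ F :=
  hF.1.elim fun x hx => hF.2.1 x hx ⊤ le_top

theorem subset_preimage_himp (hF : IsLatFilter F) (a : α) : F ⊆ (a ⇨ ·) ⁻¹' F :=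
  fun x hx => hF.2.1 x hx _ le_himp

theorem mem_preimage_himp_self (hF : IsLatFilter F) (a : α) : a ∈ (a ⇨ ·) ⁻¹' F := by
  simpa only [Set.mem_preimage, himp_self] using hF.top_mem_s17

theorem preimage_himp (hF : IsLatFilter F) (a : α) : IsLatFilter ((a ⇨ ·) ⁻¹' F) := by
  refine ⟨⟨a, hF.mem_preimage_himp_self a⟩, ?_, ?_⟩
  · exact fun x hx y hxy => hF.2.1 _ hx _ (himp_le_himp_left hxy)
  · intro x hx y hy
    simpa only [Set.mem_preimage, himp_inf_distrib] using hF.2.2 _ hx _ hy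

end GeneralizedHeytingAlgebra

end IsLatFilter

theorem stmt17 [HeytingAlgebra α] (a b : α) (T : Set α) (hT : IsPrimeFilter T) :
    a ⇨ b ∈ T ↔ ∀ T' : Set α, IsPrimeFilter T' → T ⊆ T' → a ∈ T' → b ∈ T' := by
  refine ⟨fun hab T' hT' hTT' ha => hT'.1.mem_of_himp_mem ha (hTT' hab), fun H => ?_⟩
  by_contra hab
  obtain ⟨P, hP, hsub, hbP⟩ := (hT.1.preimage_himp a).exists_isPrimeFilter_of_notMem hab
  exact hbP (H P hP ((hT.1.subset_preimage_himp a).trans hsub)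
    (hsub (hT.1.mem_preimage_himp_self a)))
end
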